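/- arXiv:2006.09922 — 2 statements merged into one kernel-verified Lean document; each statement's English description precedes it below -/
import Mathlib

section
/- The function f(k) = m(P_{1,k}) is differentiable on (4,∞), and for every k > 4 its derivative is f′(k) = (2/(kπ))·K(4/k). -/
open Real MeasureTheory Filter

/-- Complete elliptic integral of the first kind. -/
noncomputable def ellK (z : ℝ) : ℝ :=
  ∫ x in (0:ℝ)..1, 1 / Real.sqrt ((1 - x ^ 2) * (1 - z ^ 2 * x ^ 2))

/-- Complete elliptic integral of the third kind. -/
noncomputable def ellPi (n z : ℝ) : ℝ :=
  ∫ x in (0:ℝ)..1, 1 / ((1 - n * x ^ 2) * Real.sqrt ((1 - x ^ 2) * (1 - z ^ 2 * x ^ 2)))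

/-- Mahler measure of `P_{1,k}(x,y) = x + 1/x + y + 1/y + k`. -/
noncomputable def mahlerP1 (k : ℝ) : ℝ :=
  ∫ θ in (0:ℝ)..1, ∫ φ in (0:ℝ)..1,
    Real.log (Norm.norm
      (Complex.exp (2 * Real.pi * Complex.I * θ) +
        (Complex.exp (2 * Real.pi * Complex.I * θ))⁻¹ +
       Complex.exp (2 * Real.pi * Complex.I * φ) +
        (Complex.exp (2 * Real.pi * Complex.I * φ))⁻¹ + (k : ℂ)))

/-- Mahler measure of `P̃_k(x,y) = √((k+4)/(k−4))·(x + 1/x) + y − 1/y − k/√(k−4)`. -/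
noncomputable def mahlerPt (k : ℝ) : ℝ :=
  ∫ θ in (0:ℝ)..1, ∫ φ in (0:ℝ)..1,
    Real.log (Norm.norm
      ((Real.sqrt ((k + 4) / (k - 4)) : ℂ) *
        (Complex.exp (2 * Real.pi * Complex.I * θ) +
          (Complex.exp (2 * Real.pi * Complex.I * θ))⁻¹) +
       Complex.exp (2 * Real.pi * Complex.I * φ) -
        (Complex.exp (2 * Real.pi * Complex.I * φ))⁻¹ -
       ((k / Real.sqrt (k - 4) : ℝ) : ℂ)))

/-- `B_k(e^{2πiθ}) = √((k+4)/(k−4))·2cos(2πθ) − k/√(k−4)`, real on the unit circle. -/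
noncomputable def Bt (k θ : ℝ) : ℝ :=
  Real.sqrt ((k + 4) / (k - 4)) * (2 * Real.cos (2 * Real.pi * θ)) - k / Real.sqrt (k - 4)

/-- `y₊(e^{2πiθ}) = (−B + √(B² + 4))/2`. -/
noncomputable def yPlus (k θ : ℝ) : ℝ := (-Bt k θ + Real.sqrt ((Bt k θ) ^ 2 + 4)) / 2

/-- `y₋(e^{2πiθ}) = (−B − √(B² + 4))/2`. -/
noncomputable def yMinus (k θ : ℝ) : ℝ := (-Bt k θ - Real.sqrt ((Bt k θ) ^ 2 + 4)) / 2

/-- Half-Mahler measure `m⁺(P̃_k) = ∫₀¹ log⁺|y₊(e^{2πiθ})| dθ`. -/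
noncomputable def mPlus (k : ℝ) : ℝ := ∫ θ in (0:ℝ)..1, max 0 (Real.log |yPlus k θ|)

/-- Half-Mahler measure `m⁻(P̃_k) = ∫₀¹ log⁺|y₋(e^{2πiθ})| dθ`. -/
noncomputable def mMinus (k : ℝ) : ℝ := ∫ θ in (0:ℝ)..1, max 0 (Real.log |yMinus k θ|)

/-!
On the torus `P_{1,k}` takes the real values `k + 2 cos 2πθ + 2 cos 2πφ ≥ k - 4 > 0`, so
`m(P_{1,k})` is the integral of a logarithm that can be differentiated under the integral sign:
`f'(k) = ∫∫ (k + 2 cos 2πθ + 2 cos 2πφ)⁻¹`. Substituting `φ = ψ - θ`, the sum of cosines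
becomes `4 cos πψ · cos 2π(θ - ψ/2)`, and the classical integral
`∫₀¹ (a + b cos 2πθ)⁻¹ dθ = (a² - b²)^{-1/2}` leaves `∫₀¹ (k² - 16 cos² πψ)^{-1/2} dψ`,
which the substitution `x = cos πψ` turns into `(2/(kπ)) K(4/k)`.
-/

open intervalIntegral Set

theorem integral_inv_add_mul_cos {a b : ℝ} (hb : |b| < a) :
    ∫ θ in (0:ℝ)..1, (a + b * cos (2 * π * θ))⁻¹ = (√(a ^ 2 - b ^ 2))⁻¹ := by
  have hpos : ∀ t, 0 < a + b * cos t := fun t => by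
    have : |b * cos t| ≤ |b| := by
      rw [abs_mul]; exact mul_le_of_le_one_right (abs_nonneg b) (abs_cos_le_one t)
    linarith [neg_abs_le (b * cos t)]
  have ha : 0 < a := (abs_nonneg b).trans_lt hb
  have hab : 0 < a ^ 2 - b ^ 2 := by nlinarith [sq_abs b, abs_nonneg b]
  set s := √(a ^ 2 - b ^ 2)
  have hs : 0 < s := sqrt_pos.2 hab
  have hs2 : s ^ 2 = a ^ 2 - b ^ 2 := sq_sqrt hab.le
  -- Weierstrass substitution antiderivative, in an arctan form that is smooth on all of `ℝ`
  -- because `a + s + b cos t > 0`.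
  have hderiv : ∀ θ, HasDerivAt
      (fun θ => θ / s - arctan (b * sin (2 * π * θ) / (a + s + b * cos (2 * π * θ))) / (π * s))
      (a + b * cos (2 * π * θ))⁻¹ θ := fun θ => by
    have hD : 0 < a + s + b * cos (2 * π * θ) := by linarith [hpos (2 * π * θ)]
    have ht : HasDerivAt (fun θ => 2 * π * θ) (2 * π) θ := by
      simpa using (hasDerivAt_id θ).const_mul (2 * π)
    have hu := ((ht.sin.const_mul b).div ((ht.cos.const_mul b).const_add (a + s)) hD.ne').arctan
    refine (((hasDerivAt_id θ).div_const s).sub (hu.div_const (π * s))).congr_deriv ?_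
    simp only [Pi.div_apply]
    have h1 := hpos (2 * π * θ)
    have has : 0 < a + s := by linarith
    have hsc := sin_sq_add_cos_sq (2 * π * θ)
    generalize sin (2 * π * θ) = S at *
    generalize cos (2 * π * θ) = C at *
    have h2 : 1 + (b * S / (a + s + b * C)) ^ 2
        = 2 * (a + s) * (a + b * C) / (a + s + b * C) ^ 2 := by
      field_simp
      linear_combination b ^ 2 * hsc + hs2
    rw [h2]
    field_simp
    linear_combination -hs2 - b ^ 2 * hsc
  have hcont : Continuous fun θ => (a + b * cos (2 * π * θ))⁻¹ :=
    (continuous_const.add (continuous_const.mul (by fun_prop))).inv₀ fun θ => (hpos _).ne'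
  rw [integral_eq_sub_of_hasDerivAt (fun θ _ => hderiv θ) (hcont.intervalIntegrable 0 1)]
  simp

theorem ellK_eq_integral_cos (z : ℝ) :
    ellK z = π * ∫ ψ in (0:ℝ)..1/2, (√(1 - z ^ 2 * cos (π * ψ) ^ 2))⁻¹ := by
  have hcont : Continuous fun ψ : ℝ => cos (π * ψ) := by fun_prop
  have himage : (fun ψ => cos (π * ψ)) '' Icc 0 (1/2) = Icc 0 1 := by
    refine Subset.antisymm ?_ ?_
    · rintro _ ⟨ψ, hψ, rfl⟩
      refine ⟨cos_nonneg_of_mem_Icc ⟨?_, ?_⟩, cos_le_one _⟩ <;> nlinarith [pi_pos, hψ.1, hψ.2]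
    · have := intermediate_value_Icc' (by norm_num : (0:ℝ) ≤ 1/2) hcont.continuousOn
      rwa [mul_one_div, cos_pi_div_two, mul_zero, cos_zero] at this
  have hinj : InjOn (fun ψ => cos (π * ψ)) (Icc 0 (1/2)) := fun x hx y hy hxy => by
    have hmem : ∀ t ∈ Icc (0:ℝ) (1/2), π * t ∈ Icc 0 π := fun t ht =>
      ⟨by nlinarith [pi_pos, ht.1], by nlinarith [pi_pos, ht.2]⟩
    exact mul_left_cancel₀ pi_ne_zero (injOn_cos (hmem x hx) (hmem y hy) hxy)
  have hderiv : ∀ ψ ∈ Icc (0:ℝ) (1/2),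
      HasDerivWithinAt (fun ψ => cos (π * ψ)) (-(sin (π * ψ) * π)) (Icc 0 (1/2)) ψ := fun ψ _ => by
    simpa using ((hasDerivAt_id ψ).const_mul π).cos.hasDerivWithinAt
  have hsubst := integral_image_eq_integral_abs_deriv_smul measurableSet_Icc hderiv hinj
    (fun x => 1 / √((1 - x ^ 2) * (1 - z ^ 2 * x ^ 2)))
  rw [himage] at hsubst
  rw [ellK, integral_of_le zero_le_one, ← integral_Icc_eq_integral_Ioc, hsubst,
    integral_Icc_eq_integral_Ioc, integral_of_le (by norm_num), ← MeasureTheory.integral_const_mul]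
  refine setIntegral_congr_fun measurableSet_Ioc fun ψ hψ => ?_
  have hsin : 0 < sin (π * ψ) :=
    sin_pos_of_pos_of_lt_pi (by nlinarith [pi_pos, hψ.1]) (by nlinarith [pi_pos, hψ.2])
  have hsq : 1 - cos (π * ψ) ^ 2 = sin (π * ψ) ^ 2 := by linarith [sin_sq_add_cos_sq (π * ψ)]
  simp only [smul_eq_mul, abs_neg, abs_mul, abs_of_pos hsin, abs_of_pos pi_pos]
  rw [hsq, sqrt_mul (sq_nonneg _), sqrt_sq hsin.le, one_div, mul_inv,
    mul_comm (sin _) π, mul_assoc, mul_inv_cancel_left₀ hsin.ne']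

theorem integral_inv_sqrt_sq_sub_sq_mul_cos {c k : ℝ} (hc : |c| < k) :
    ∫ ψ in (0:ℝ)..1, (√(k ^ 2 - (c * cos (π * ψ)) ^ 2))⁻¹ = 2 / (k * π) * ellK (c / k) := by
  have hk : 0 < k := (abs_nonneg c).trans_lt hc
  have hpos : ∀ ψ, 0 < k ^ 2 - (c * cos (π * ψ)) ^ 2 := fun ψ => by
    have : |c * cos (π * ψ)| < k := by
      rw [abs_mul]; exact (mul_le_of_le_one_right (abs_nonneg c) (abs_cos_le_one _)).trans_lt hc
    nlinarith [sq_abs (c * cos (π * ψ)), abs_nonneg (c * cos (π * ψ))]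
  have hcont : Continuous fun ψ => (√(k ^ 2 - (c * cos (π * ψ)) ^ 2))⁻¹ :=
    (continuous_const.sub (by fun_prop)).sqrt.inv₀ fun ψ => (sqrt_pos.2 (hpos ψ)).ne'
  have hreflect : ∫ ψ in (1/2:ℝ)..1, (√(k ^ 2 - (c * cos (π * ψ)) ^ 2))⁻¹
      = ∫ ψ in (0:ℝ)..1/2, (√(k ^ 2 - (c * cos (π * ψ)) ^ 2))⁻¹ := by
    have := integral_comp_sub_left (a := 0) (b := 1/2)
      (fun ψ => (√(k ^ 2 - (c * cos (π * ψ)) ^ 2))⁻¹) 1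
    rw [sub_zero, show (1:ℝ) - 1/2 = 1/2 by norm_num] at this
    rw [← this]
    congr 1 with ψ
    rw [mul_sub, mul_one, cos_pi_sub, mul_neg, neg_sq]
  have hscale : ∀ ψ, (√(k ^ 2 - (c * cos (π * ψ)) ^ 2))⁻¹
      = k⁻¹ * (√(1 - (c / k) ^ 2 * cos (π * ψ) ^ 2))⁻¹ := fun ψ => by
    rw [← mul_inv, ← sqrt_sq hk.le, ← sqrt_mul (sq_nonneg k), sqrt_sq hk.le]
    congr 2
    field_simp
  rw [← integral_add_adjacent_intervals (hcont.intervalIntegrable 0 (1/2))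
    (hcont.intervalIntegrable (1/2) 1), hreflect, ellK_eq_integral_cos]
  simp only [hscale, intervalIntegral.integral_const_mul]
  field_simp
  ring

theorem Function.Periodic.intervalIntegral_comp_sub_eq {E : Type*} [NormedAddCommGroup E]
    [NormedSpace ℝ E] {f : ℝ → E} {T : ℝ} (hf : Function.Periodic f T) (c : ℝ) :
    ∫ x in (0:ℝ)..T, f (x - c) = ∫ x in (0:ℝ)..T, f x := by
  simpa [integral_comp_sub_right, sub_eq_neg_add] using hf.intervalIntegral_add_eq (-c) 0

theorem integral_inv_add_two_cos_add_two_cos_sub {k : ℝ} (hk : 4 < k) (ψ : ℝ) :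
    ∫ θ in (0:ℝ)..1, (k + (2 * cos (2 * π * θ) + 2 * cos (2 * π * (ψ - θ))))⁻¹
      = (√(k ^ 2 - (4 * cos (π * ψ)) ^ 2))⁻¹ := by
  have hsum : ∀ θ, 2 * cos (2 * π * θ) + 2 * cos (2 * π * (ψ - θ))
      = 4 * cos (π * ψ) * cos (2 * π * (θ - ψ / 2)) := fun θ => by
    have := cos_add_cos (2 * π * θ) (2 * π * (ψ - θ))
    rw [show (2 * π * θ + 2 * π * (ψ - θ)) / 2 = π * ψ by ring,
      show (2 * π * θ - 2 * π * (ψ - θ)) / 2 = 2 * π * (θ - ψ / 2) by ring] at this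
    linarith
  have hper : Function.Periodic (fun u => (k + 4 * cos (π * ψ) * cos (2 * π * u))⁻¹) 1 :=
    fun u => by simp only [mul_add, mul_one, cos_add_two_pi]
  have hb : |4 * cos (π * ψ)| < k := by
    rw [abs_mul, abs_of_pos four_pos]
    linarith [mul_le_of_le_one_right four_pos.le (abs_cos_le_one (π * ψ))]
  simp only [hsum]
  exact (hper.intervalIntegral_comp_sub_eq (ψ / 2)).trans (integral_inv_add_mul_cos hb)

section BoundedLog

variable {α : Type*} [MeasurableSpace α] {μ : Measure α} [IsFiniteMeasure μ] {g : α → ℝ} {c x : ℝ}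

theorem integrable_inv_add_of_abs_le (hg : AEMeasurable g μ) (hgc : ∀ a, |g a| ≤ c)
    (hx : c < x) : Integrable (fun a => (x + g a)⁻¹) μ :=
  Integrable.of_bound (hg.const_add x).inv.aestronglyMeasurable (x - c)⁻¹ <| ae_of_all _ fun a => by
    have := abs_le.1 (hgc a)
    rw [norm_inv, norm_eq_abs, abs_of_pos (by linarith)]
    exact inv_anti₀ (by linarith) (by linarith)

theorem integrable_log_add_of_abs_le (hg : AEMeasurable g μ) (hgc : ∀ a, |g a| ≤ c)
    (hx : c < x) : Integrable (fun a => log (x + g a)) μ :=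
  Integrable.of_bound (hg.const_add x).log.aestronglyMeasurable (max |log (x - c)| |log (x + c)|) <|
    ae_of_all _ fun a => by
      have := abs_le.1 (hgc a)
      exact abs_le_max_abs_abs (log_le_log (by linarith) (by linarith))
        (log_le_log (by linarith) (by linarith))

theorem hasDerivAt_integral_log_add (hg : AEMeasurable g μ) (hgc : ∀ a, |g a| ≤ c)
    (hx : c < x) :
    HasDerivAt (fun y => ∫ a, log (y + g a) ∂μ) (∫ a, (x + g a)⁻¹ ∂μ) x := by
  set δ := (x - c) / 2
  have hδ : 0 < δ := half_pos (sub_pos.2 hx)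
  have hball : ∀ y ∈ Metric.ball x δ, ∀ a, δ < y + g a := fun y hy a => by
    rw [Metric.mem_ball, dist_eq, abs_lt] at hy
    linarith [abs_le.1 (hgc a), show δ = (x - c) / 2 from rfl]
  refine (hasDerivAt_integral_of_dominated_loc_of_deriv_le (F := fun y a => log (y + g a))
    (F' := fun y a => (y + g a)⁻¹) (bound := fun _ => δ⁻¹) (Metric.ball_mem_nhds x hδ)
    (Eventually.of_forall fun y => (hg.const_add y).log.aestronglyMeasurable)
    (integrable_log_add_of_abs_le hg hgc hx) (hg.const_add x).inv.aestronglyMeasurable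
    (ae_of_all _ fun a y hy => ?_) (integrable_const _) (ae_of_all _ fun a y hy => ?_)).2
  · have := hball y hy a
    rw [norm_inv, norm_eq_abs, abs_of_pos (hδ.trans this)]
    exact inv_anti₀ hδ this.le
  · simpa using ((hasDerivAt_id y).add_const (g a)).log (hδ.trans (hball y hy a)).ne'

end BoundedLog

/-- The Laurent polynomial `x + 1/x + y + 1/y` at `(x, y) = (e^{2πiθ}, e^{2πiφ})`. -/
noncomputable def cosSum (p : ℝ × ℝ) : ℝ := 2 * cos (2 * π * p.1) + 2 * cos (2 * π * p.2)

theorem abs_cosSum_le (p : ℝ × ℝ) : |cosSum p| ≤ 4 := by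
  rw [cosSum, abs_le]
  constructor <;> linarith [neg_one_le_cos (2 * π * p.1), neg_one_le_cos (2 * π * p.2),
    cos_le_one (2 * π * p.1), cos_le_one (2 * π * p.2)]

@[fun_prop]
theorem continuous_cosSum : Continuous cosSum := by
  unfold cosSum; fun_prop

noncomputable abbrev unitSquare : Measure (ℝ × ℝ) :=
  (volume.restrict (Ioc 0 1)).prod (volume.restrict (Ioc 0 1))

theorem cexp_add_inv_cexp (t : ℝ) :
    Complex.exp (2 * π * Complex.I * t) + (Complex.exp (2 * π * Complex.I * t))⁻¹
      = ((2 * cos (2 * π * t) : ℝ) : ℂ) := by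
  rw [← Complex.exp_neg, show 2 * π * Complex.I * t = ((2 * π * t : ℝ) : ℂ) * Complex.I by
    push_cast; ring, ← neg_mul, Complex.exp_mul_I, Complex.exp_mul_I, Complex.cos_neg,
    Complex.sin_neg, ← Complex.ofReal_cos]
  push_cast
  ring

theorem mahlerP1_eq_integral {x : ℝ} (hx : 4 < x) :
    mahlerP1 x = ∫ p, log (x + cosSum p) ∂unitSquare := by
  have hnorm : ∀ θ φ : ℝ, ‖Complex.exp (2 * π * Complex.I * θ) +
      (Complex.exp (2 * π * Complex.I * θ))⁻¹ + Complex.exp (2 * π * Complex.I * φ) +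
      (Complex.exp (2 * π * Complex.I * φ))⁻¹ + (x : ℂ)‖ = x + cosSum (θ, φ) := fun θ φ => by
    have hθ := cexp_add_inv_cexp θ
    have hφ := cexp_add_inv_cexp φ
    rw [show _ + (x : ℂ) = ((x + cosSum (θ, φ) : ℝ) : ℂ) by
      push_cast [cosSum] at hθ hφ ⊢; linear_combination hθ + hφ, Complex.norm_real, norm_eq_abs,
      abs_of_pos (by linarith [abs_le.1 (abs_cosSum_le (θ, φ))])]
  rw [integral_prod _
    (integrable_log_add_of_abs_le continuous_cosSum.aemeasurable abs_cosSum_le hx)]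
  simp only [mahlerP1, hnorm, integral_of_le zero_le_one]

theorem integral_inv_add_cosSum {k : ℝ} (hk : 4 < k) :
    ∫ p, (k + cosSum p)⁻¹ ∂unitSquare = 2 / (k * π) * ellK (4 / k) := by
  have hshift : ∀ θ, ∫ φ in Ioc 0 1, (k + cosSum (θ, φ))⁻¹
      = ∫ ψ in Ioc 0 1, (k + cosSum (θ, ψ - θ))⁻¹ := fun θ => by
    have hper : Function.Periodic (fun φ => (k + cosSum (θ, φ))⁻¹) 1 :=
      fun φ => by simp only [cosSum, mul_add, mul_one, cos_add_two_pi]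
    simpa only [integral_of_le zero_le_one] using (hper.intervalIntegral_comp_sub_eq θ).symm
  calc ∫ p, (k + cosSum p)⁻¹ ∂unitSquare
      = ∫ θ in Ioc 0 1, ∫ φ in Ioc 0 1, (k + cosSum (θ, φ))⁻¹ :=
        integral_prod _
          (integrable_inv_add_of_abs_le continuous_cosSum.aemeasurable abs_cosSum_le hk)
    _ = ∫ θ in Ioc 0 1, ∫ ψ in Ioc 0 1, (k + cosSum (θ, ψ - θ))⁻¹ := by simp only [hshift]
    _ = ∫ ψ in Ioc 0 1, ∫ θ in Ioc 0 1, (k + cosSum (θ, ψ - θ))⁻¹ :=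
        integral_integral_swap <| integrable_inv_add_of_abs_le (μ := unitSquare)
          (g := fun p => cosSum (p.1, p.2 - p.1)) (by fun_prop) (fun p => abs_cosSum_le _) hk
    _ = ∫ ψ in Ioc 0 1, (√(k ^ 2 - (4 * cos (π * ψ)) ^ 2))⁻¹ := by
        simp only [← integral_of_le zero_le_one]
        exact integral_congr fun ψ _ => integral_inv_add_two_cos_add_two_cos_sub hk ψ
    _ = 2 / (k * π) * ellK (4 / k) := by
        rw [← integral_of_le zero_le_one]
        exact integral_inv_sqrt_sq_sub_sq_mul_cos (by rwa [abs_of_pos four_pos])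

/-- `f(k) = m(P_{1,k})` is differentiable on `(4,∞)` with `f′(k) = (2/(kπ))·K(4/k)`. -/
theorem mahlerP1_hasDerivAt (k : ℝ) (hk : 4 < k) :
    HasDerivAt mahlerP1 (2 / (k * Real.pi) * ellK (4 / k)) k := by
  have h := hasDerivAt_integral_log_add (μ := unitSquare) continuous_cosSum.aemeasurable
    abs_cosSum_le hk
  rw [integral_inv_add_cosSum hk] at h
  exact h.congr_of_eventuallyEq <| (eventually_gt_nhds hk).mono fun x hx => mahlerP1_eq_integral hx
end

section
/- For every real k > 2(1+√5), the half-Mahler measure m⁻(P̃_k) equals 0; consequently m⁺(P̃_k) − m⁻(P̃_k) = m(P̃_k). -/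
/-!
On the unit circle `x = e^{2πiθ}` the number `B = B_k(x)` is real and
`|B + y − 1/y| = |(y − y₊)(y − y₋)|` for `|y| = 1`, where `y₊ + y₋ = −B` and `y₊ y₋ = −1`.
Jensen's formula `∫₀¹ log |e^{2πiφ} − a| dφ = log⁺ |a|` then turns the inner integral of
`m(P̃_k)` into `log⁺ |y₊| + log⁺ |y₋|`, so `m(P̃_k) = m⁺(P̃_k) + m⁻(P̃_k)` for every `k`.
For `k ≥ 2(1 + √5)` we have `k² − 4k − 16 ≥ 0`, i.e. `2√(k+4) ≤ k`, hence `B_k ≤ 0` on the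
whole circle; this forces `|y₋| ≤ 1` everywhere, and therefore `m⁻(P̃_k) = 0`.
-/

open Real MeasureTheory Filter

open Polynomial

theorem integral_comp_exp_eq_circleAverage (g : ℂ → ℝ) :
    ∫ φ in (0:ℝ)..1, g (Complex.exp (2 * π * Complex.I * φ)) = circleAverage g 0 1 := by
  have h := intervalIntegral.integral_comp_mul_left
    (fun t : ℝ ↦ g (circleMap 0 1 t)) (a := 0) (b := 1) (two_pi_pos.ne')
  simp only [mul_zero, mul_one, smul_eq_mul] at h
  rw [circleAverage_def, smul_eq_mul, ← h]
  congr! 3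
  rw [circleMap_zero]
  push_cast
  ring_nf

theorem circleAverage_log_norm_sub_mul_sub (a b : ℂ) :
    circleAverage (fun z ↦ log ‖(z - a) * (z - b)‖) 0 1 = log⁺ ‖a‖ + log⁺ ‖b‖ := by
  have h := logMahlerMeasure_mul_eq_add_logMahlerMeasure
    (mul_ne_zero (X_sub_C_ne_zero a) (X_sub_C_ne_zero b))
  simpa [logMahlerMeasure_def] using h

theorem norm_add_sub_inv_eq_norm_sub_mul_sub {w a b B : ℂ} (hw : ‖w‖ = 1)
    (hsum : a + b = -B) (hprod : a * b = -1) :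
    ‖B + w - w⁻¹‖ = ‖(w - a) * (w - b)‖ := by
  have hw0 : w ≠ 0 := norm_ne_zero_iff.mp (by rw [hw]; exact one_ne_zero)
  have hfactor : w * (B + w - w⁻¹) = (w - a) * (w - b) := by
    rw [mul_sub, mul_add, mul_inv_cancel₀ hw0]
    linear_combination w * hsum - hprod
  rw [← hfactor, norm_mul, hw, one_mul]

theorem integral_log_norm_add_exp_sub_inv {a b B : ℂ} (hsum : a + b = -B) (hprod : a * b = -1) :
    ∫ φ in (0:ℝ)..1, log ‖B + Complex.exp (2 * π * Complex.I * φ)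
        - (Complex.exp (2 * π * Complex.I * φ))⁻¹‖ = log⁺ ‖a‖ + log⁺ ‖b‖ := by
  rw [← circleAverage_log_norm_sub_mul_sub, ← integral_comp_exp_eq_circleAverage]
  congr! 3
  refine norm_add_sub_inv_eq_norm_sub_mul_sub ?_ hsum hprod
  rw [Complex.norm_exp]
  simp

theorem exp_add_exp_inv_eq_two_cos (θ : ℝ) :
    Complex.exp (2 * π * Complex.I * θ) + (Complex.exp (2 * π * Complex.I * θ))⁻¹
      = ((2 * cos (2 * π * θ) : ℝ) : ℂ) := by
  rw [← Complex.exp_neg]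
  push_cast
  rw [Complex.two_cos]
  ring_nf

theorem mahlerPt_eq_integral_Bt (k : ℝ) :
    mahlerPt k = ∫ θ in (0:ℝ)..1, ∫ φ in (0:ℝ)..1, log ‖(Bt k θ : ℂ)
      + Complex.exp (2 * π * Complex.I * φ) - (Complex.exp (2 * π * Complex.I * φ))⁻¹‖ := by
  unfold mahlerPt Bt
  congr! 5
  rw [exp_add_exp_inv_eq_two_cos]
  push_cast
  congr 1
  ring

theorem yPlus_add_yMinus (k θ : ℝ) : yPlus k θ + yMinus k θ = -Bt k θ := by
  unfold yPlus yMinus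
  ring

theorem yPlus_mul_yMinus (k θ : ℝ) : yPlus k θ * yMinus k θ = -1 := by
  unfold yPlus yMinus
  linear_combination (-1 / 4 : ℝ) * Real.sq_sqrt (by positivity : 0 ≤ Bt k θ ^ 2 + 4)

theorem continuous_yPlus (k : ℝ) : Continuous (yPlus k) := by
  unfold yPlus Bt
  fun_prop

theorem continuous_yMinus (k : ℝ) : Continuous (yMinus k) := by
  unfold yMinus Bt
  fun_prop

theorem mahlerPt_eq_mPlus_add_mMinus (k : ℝ) : mahlerPt k = mPlus k + mMinus k := by
  have hinner (θ : ℝ) := integral_log_norm_add_exp_sub_inv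
    (a := yPlus k θ) (b := yMinus k θ) (B := Bt k θ)
    (by exact_mod_cast yPlus_add_yMinus k θ) (by exact_mod_cast yPlus_mul_yMinus k θ)
  simp only [Complex.norm_real, Real.norm_eq_abs] at hinner
  rw [mahlerPt_eq_integral_Bt, intervalIntegral.integral_congr (fun θ _ ↦ hinner θ)]
  -- `log⁺ r` unfolds to `max 0 (log r)`, the integrand of `mPlus` and `mMinus`.
  exact intervalIntegral.integral_add
    ((continuous_posLog.comp (continuous_yPlus k).abs).intervalIntegrable _ _)
    ((continuous_posLog.comp (continuous_yMinus k).abs).intervalIntegrable _ _)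

theorem Bt_nonpos {k : ℝ} (hk : 2 * (1 + √5) ≤ k) (θ : ℝ) : Bt k θ ≤ 0 := by
  have h5 := Real.sq_sqrt (show (0 : ℝ) ≤ 5 by norm_num)
  have hk4 : 4 < k := by nlinarith [Real.sqrt_nonneg 5]
  have hroot : 2 * √(k + 4) ≤ k := by
    nlinarith [Real.sq_sqrt (show 0 ≤ k + 4 by linarith), Real.sqrt_nonneg 5,
      Real.sqrt_nonneg (k + 4)]
  unfold Bt
  rw [Real.sqrt_div (by linarith), div_mul_eq_mul_div, ← sub_div]
  refine div_nonpos_of_nonpos_of_nonneg ?_ (Real.sqrt_nonneg _)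
  nlinarith [cos_le_one (2 * π * θ), Real.sqrt_nonneg (k + 4)]

theorem abs_yMinus_le_one {k θ : ℝ} (h : Bt k θ ≤ 0) : |yMinus k θ| ≤ 1 := by
  have hs := Real.sq_sqrt (by positivity : 0 ≤ Bt k θ ^ 2 + 4)
  have hs0 := Real.sqrt_nonneg (Bt k θ ^ 2 + 4)
  unfold yMinus
  rw [abs_le]
  constructor <;> nlinarith

theorem mMinus_eq_zero_of_Bt_nonpos {k : ℝ} (h : ∀ θ, Bt k θ ≤ 0) : mMinus k = 0 := by
  have hzero (θ : ℝ) : max 0 (log |yMinus k θ|) = 0 :=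
    max_eq_left (log_nonpos (abs_nonneg _) (abs_yMinus_le_one (h θ)))
  rw [mMinus, intervalIntegral.integral_congr (fun θ _ ↦ hzero θ)]
  simp

/-- For every real `k > 2(1+√5)`, `m⁻(P̃_k) = 0` and consequently
`m⁺(P̃_k) − m⁻(P̃_k) = m(P̃_k)`. -/
theorem mMinus_eq_zero (k : ℝ) (hk : 2 * (1 + Real.sqrt 5) < k) :
    mMinus k = 0 ∧ mPlus k - mMinus k = mahlerPt k := by
  have hminus := mMinus_eq_zero_of_Bt_nonpos (Bt_nonpos hk.le)
  refine ⟨hminus, ?_⟩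
  rw [mahlerPt_eq_mPlus_add_mMinus, hminus]
  ring
end
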